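/- Let K be a field and R = K[x,y,z]. Let J = (x^3, x^2z, xz^2, yz^3) ⊆ R. Then for every integer s ≥ 1, J^s = (x,y)^s ∩ (x,z)^{3s}. -/

import Mathlib

/-!
All three ideals are monomial ideals, so it suffices to compare monomials. A monomial lies in
`(x,y)^s` (resp. `(x,z)^{3s}`) iff its exponents satisfy `a + b ≥ s` (resp. `a + c ≥ 3s`). Conversely,
such a monomial `x^a y^b z^c` is divisible by a product of `s` generators of `J`: take `t` of the
generators `x³, x²z, xz²` (all of bidegree 3 in `x, z`) and `s - t` copies of `yz³`, where `t` is
large enough for `s - t ≤ b` and `3(s - t) ≤ c`, and distribute the `x`-degree among the `t`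
factors so that it fits in `a`.
-/

open MvPolynomial

namespace MvPolynomial

variable {σ R : Type*} [CommSemiring R]

theorem mem_of_forall_monomial_mem {I : Ideal (MvPolynomial σ R)} {f : MvPolynomial σ R}
    (h : ∀ μ ∈ f.support, monomial μ (1 : R) ∈ I) : f ∈ I := by
  rw [f.as_sum]
  refine Ideal.sum_mem _ fun μ hμ => ?_
  rw [← mul_one (f.coeff μ), ← C_mul_monomial]
  exact Ideal.mul_mem_left _ _ (h μ hμ)

theorem span_X_pair_pow_le_span_monomial (i j : σ) (n : ℕ) :
    Ideal.span {(X i : MvPolynomial σ R), X j} ^ n ≤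
      Ideal.span ((fun μ => monomial μ (1 : R)) '' {μ | n ≤ μ i + μ j}) := by
  induction n with
  | zero =>
    rw [pow_zero, Ideal.one_eq_top, top_le_iff, Ideal.eq_top_iff_one]
    exact Ideal.subset_span ⟨0, by simp, by simp⟩
  | succ n ih =>
    rw [pow_succ]
    refine (Ideal.mul_mono_left ih).trans ?_
    rw [Ideal.span_mul_span', Ideal.span_le]
    rintro _ ⟨_, ⟨ν, hν, rfl⟩, _, hk, rfl⟩
    have hX : ∀ k, (k = i ∨ k = j) → monomial ν (1 : R) * X k ∈
        Ideal.span ((fun μ => monomial μ (1 : R)) '' {μ | n + 1 ≤ μ i + μ j}) := by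
      rintro k hk
      rw [← pow_one (X k), ← monomial_add_single]
      refine Ideal.subset_span ⟨_, ?_, rfl⟩
      simp only [Set.mem_ofPred_eq, Finsupp.add_apply] at hν ⊢
      rcases hk with rfl | rfl <;> simp only [Finsupp.single_eq_same] <;> omega
    rcases hk with rfl | rfl
    exacts [hX i (.inl rfl), hX j (.inr rfl)]

theorem le_add_of_mem_span_X_pair_pow {i j : σ} {n : ℕ} {f : MvPolynomial σ R}
    (hf : f ∈ Ideal.span {(X i : MvPolynomial σ R), X j} ^ n) {μ : σ →₀ ℕ}
    (hμ : μ ∈ f.support) : n ≤ μ i + μ j := by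
  obtain ⟨ν, hν, hνμ⟩ :=
    mem_ideal_span_monomial_image.1 (span_X_pair_pow_le_span_monomial i j n hf) μ hμ
  exact hν.trans (add_le_add (hνμ i) (hνμ j))

end MvPolynomial

theorem exists_generator_counts {a b c s : ℕ} (hab : s ≤ a + b) (hac : 3 * s ≤ a + c) :
    ∃ m₃ m₂ m₁ m₀ : ℕ, m₃ + m₂ + m₁ + m₀ = s ∧ 3 * m₃ + 2 * m₂ + m₁ ≤ a ∧ m₀ ≤ b ∧
      m₂ + 2 * m₁ + 3 * m₀ ≤ c := by
  -- `t` factors of `x³, x²z, xz²` carrying total `x`-degree `e`, and `s - t` factors `yz³`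
  set t := max (s - b) ((3 * s - c + 2) / 3)
  set e := max t (3 * s - c)
  exact ⟨(e - t) / 2, (e - t) % 2, t - (e - t) / 2 - (e - t) % 2, s - t,
    by omega, by omega, by omega, by omega⟩

section

variable (R : Type*) [CommSemiring R]

noncomputable abbrev idealJ : Ideal (MvPolynomial (Fin 3) R) :=
  Ideal.span {X 0 ^ 3, X 0 ^ 2 * X 2, X 0 * X 2 ^ 2, X 1 * X 2 ^ 3}

theorem idealJ_le_span_X0_X1 : idealJ R ≤ Ideal.span {X 0, X 1} := by
  have hx : (X 0 : MvPolynomial (Fin 3) R) ∈ Ideal.span {X 0, X 1} := Ideal.subset_span (by simp)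
  have hy : (X 1 : MvPolynomial (Fin 3) R) ∈ Ideal.span {X 0, X 1} := Ideal.subset_span (by simp)
  simp only [idealJ, Ideal.span_le, Set.insert_subset_iff, Set.singleton_subset_iff,
    SetLike.mem_coe]
  exact ⟨Ideal.pow_mem_of_mem _ hx 3 three_pos,
    Ideal.mul_mem_right _ _ (Ideal.pow_mem_of_mem _ hx 2 two_pos),
    Ideal.mul_mem_right _ _ hx, Ideal.mul_mem_right _ _ hy⟩

theorem idealJ_le_span_X0_X2_pow_three : idealJ R ≤ Ideal.span {X 0, X 2} ^ 3 := by
  have hx : (X 0 : MvPolynomial (Fin 3) R) ∈ Ideal.span {X 0, X 2} := Ideal.subset_span (by simp)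
  have hz : (X 2 : MvPolynomial (Fin 3) R) ∈ Ideal.span {X 0, X 2} := Ideal.subset_span (by simp)
  simp only [idealJ, Ideal.span_le, Set.insert_subset_iff, Set.singleton_subset_iff,
    SetLike.mem_coe]
  refine ⟨Ideal.pow_mem_pow hx 3, ?_, ?_, Ideal.mul_mem_left _ _ (Ideal.pow_mem_pow hz 3)⟩
  · rw [pow_succ]
    exact Ideal.mul_mem_mul (Ideal.pow_mem_pow hx 2) hz
  · rw [pow_succ']
    exact Ideal.mul_mem_mul hx (Ideal.pow_mem_pow hz 2)

variable {R}

theorem monomial_mem_idealJ_pow {s : ℕ} {μ : Fin 3 →₀ ℕ} (hxy : s ≤ μ 0 + μ 1)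
    (hxz : 3 * s ≤ μ 0 + μ 2) : monomial μ (1 : R) ∈ idealJ R ^ s := by
  obtain ⟨m₃, m₂, m₁, m₀, hs, ha, hb, hc⟩ := exists_generator_counts hxy hxz
  have hgen : ((X 0 : MvPolynomial (Fin 3) R) ^ 3) ^ m₃ * (X 0 ^ 2 * X 2) ^ m₂ *
      (X 0 * X 2 ^ 2) ^ m₁ * (X 1 * X 2 ^ 3) ^ m₀ ∈ idealJ R ^ s := by
    have hmem : ∀ g ∈ ({X 0 ^ 3, X 0 ^ 2 * X 2, X 0 * X 2 ^ 2, X 1 * X 2 ^ 3} :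
        Set (MvPolynomial (Fin 3) R)), g ∈ idealJ R := fun _ hg => Ideal.subset_span hg
    rw [← hs, pow_add, pow_add, pow_add]
    exact Ideal.mul_mem_mul (Ideal.mul_mem_mul (Ideal.mul_mem_mul
      (Ideal.pow_mem_pow (hmem _ (by simp)) m₃) (Ideal.pow_mem_pow (hmem _ (by simp)) m₂))
      (Ideal.pow_mem_pow (hmem _ (by simp)) m₁)) (Ideal.pow_mem_pow (hmem _ (by simp)) m₀)
  have hμ : monomial μ (1 : R) = X 0 ^ (μ 0 - (3 * m₃ + 2 * m₂ + m₁)) * X 1 ^ (μ 1 - m₀) *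
      X 2 ^ (μ 2 - (m₂ + 2 * m₁ + 3 * m₀)) * (((X 0 : MvPolynomial (Fin 3) R) ^ 3) ^ m₃ *
        (X 0 ^ 2 * X 2) ^ m₂ * (X 0 * X 2 ^ 2) ^ m₁ * (X 1 * X 2 ^ 3) ^ m₀) := by
    rw [monomial_eq, Finsupp.prod_pow, Fin.prod_univ_three, C_1, one_mul]
    nth_rw 1 [← Nat.sub_add_cancel ha, ← Nat.sub_add_cancel hb, ← Nat.sub_add_cancel hc]
    ring
  exact hμ ▸ Ideal.mul_mem_left _ _ hgen

end

theorem stmt_16_general {K : Type*} [Field K] (s : ℕ) :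
    (Ideal.span {(X 0 : MvPolynomial (Fin 3) K) ^ 3, X 0 ^ 2 * X 2,
        X 0 * X 2 ^ 2, X 1 * X 2 ^ 3}) ^ s =
      (Ideal.span {(X 0 : MvPolynomial (Fin 3) K), X 1}) ^ s ⊓
        (Ideal.span {(X 0 : MvPolynomial (Fin 3) K), X 2}) ^ (3 * s) := by
  refine le_antisymm (le_inf ?_ ?_) fun f ⟨hxy, hxz⟩ => ?_
  · exact Ideal.pow_right_mono (idealJ_le_span_X0_X1 K) s
  · rw [pow_mul]
    exact Ideal.pow_right_mono (idealJ_le_span_X0_X2_pow_three K) s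
  · exact mem_of_forall_monomial_mem fun μ hμ => monomial_mem_idealJ_pow
      (le_add_of_mem_span_X_pair_pow hxy hμ) (le_add_of_mem_span_X_pair_pow hxz hμ)

/-- `x = X 0`, `y = X 1`, `z = X 2` in `R = K[x,y,z]`. -/
theorem stmt_16 {K : Type*} [Field K] (s : ℕ) (hs : 1 ≤ s) :
    (Ideal.span {(X 0 : MvPolynomial (Fin 3) K) ^ 3, X 0 ^ 2 * X 2,
        X 0 * X 2 ^ 2, X 1 * X 2 ^ 3}) ^ s =
      (Ideal.span {(X 0 : MvPolynomial (Fin 3) K), X 1}) ^ s ⊓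
        (Ideal.span {(X 0 : MvPolynomial (Fin 3) K), X 2}) ^ (3 * s) :=
  stmt_16_general s
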